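/- arXiv:2411.10784 — 3 statements merged into one kernel-verified Lean document; each statement's English description precedes it below -/
import Mathlib

section
/- Let I ⊆ ℝ^d be a nonempty set of vectors all of whose coordinates are strictly positive, let X = {x ∈ [0,1]^d : Σᵢ xᵢ = 1} be the standard simplex, and define F : X → ℝ by F(x) = inf_{α ∈ I} ⟨x, α⟩. Then F is continuous on X. -/
/-!
The infimum `F` of the linear forms `x ↦ ⟪x, α⟫`, `α ∈ I`, is upper semicontinuous as an infimum
of continuous functions, bounded below by `0` on the nonnegative orthant. For lower
semicontinuity at `x₀` we use that, since every `α` has nonnegative coordinates, `F` is monotone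
and positively homogeneous there: `c • x₀ ≤ x` coordinatewise gives `c * F x₀ ≤ F x`. For a fixed
`c < 1` this holds for all `x` in the orthant near `x₀`, because coordinates with `x₀ i = 0`
impose no condition and the others are open conditions. Letting `c → 1` gives lower
semicontinuity.
-/

open Filter Topology Set
open scoped InnerProductSpace

variable {ι : Type*} [Fintype ι]

noncomputable def infInner (I : Set (EuclideanSpace ℝ ι)) (x : EuclideanSpace ℝ ι) : ℝ :=
  ⨅ α : I, ⟪x, (α : EuclideanSpace ℝ ι)⟫_ℝ

theorem sInf_setOf_inner_eq_infInner (I : Set (EuclideanSpace ℝ ι)) (x : EuclideanSpace ℝ ι) :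
    sInf {v : ℝ | ∃ α ∈ I, v = ⟪x, α⟫_ℝ} = infInner I x := by
  rw [infInner, ← sInf_image']
  congr 1
  ext v
  simp [eq_comm]

theorem inner_le_inner_of_forall_le {x y α : EuclideanSpace ℝ ι} (hxy : ∀ i, x i ≤ y i)
    (hα : ∀ i, 0 ≤ α i) : ⟪x, α⟫_ℝ ≤ ⟪y, α⟫_ℝ := by
  simp only [PiLp.inner_apply, RCLike.inner_apply, conj_trivial]
  exact Finset.sum_le_sum fun i _ => mul_le_mul_of_nonneg_left (hxy i) (hα i)

theorem bddBelow_range_inner {I : Set (EuclideanSpace ℝ ι)} (hI : ∀ α ∈ I, ∀ i, 0 ≤ α i)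
    {x : EuclideanSpace ℝ ι} (hx : ∀ i, 0 ≤ x i) :
    BddBelow (range fun α : I => ⟪x, (α : EuclideanSpace ℝ ι)⟫_ℝ) := by
  refine ⟨0, ?_⟩
  rintro _ ⟨α, rfl⟩
  simpa using inner_le_inner_of_forall_le (x := 0) hx (hI α α.2)

theorem upperSemicontinuousOn_infInner {I : Set (EuclideanSpace ℝ ι)}
    (hI : ∀ α ∈ I, ∀ i, 0 ≤ α i) :
    UpperSemicontinuousOn (infInner I) {x | ∀ i, 0 ≤ x i} :=
  upperSemicontinuousOn_ciInf (fun _ hx => bddBelow_range_inner hI hx) fun _ =>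
    (continuous_id.inner continuous_const).continuousOn.upperSemicontinuousOn

theorem mul_infInner_le_infInner {I : Set (EuclideanSpace ℝ ι)} (hI : ∀ α ∈ I, ∀ i, 0 ≤ α i)
    {x₀ x : EuclideanSpace ℝ ι} (hx₀ : ∀ i, 0 ≤ x₀ i) {c : ℝ} (hc : 0 ≤ c)
    (hle : ∀ i, c * x₀ i ≤ x i) : c * infInner I x₀ ≤ infInner I x := by
  rw [infInner, infInner, Real.mul_iInf_of_nonneg hc]
  simp_rw [← real_inner_smul_left]
  refine ciInf_mono (bddBelow_range_inner hI fun i => ?_) fun α =>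
    inner_le_inner_of_forall_le (fun i => ?_) (hI α α.2)
  · simpa using mul_nonneg hc (hx₀ i)
  · simpa using hle i

theorem eventually_mul_apply_le {x₀ : EuclideanSpace ℝ ι} (hx₀ : ∀ i, 0 ≤ x₀ i) {c : ℝ}
    (hc : c < 1) : ∀ᶠ x in 𝓝[{x | ∀ i, 0 ≤ x i}] x₀, ∀ i, c * x₀ i ≤ x i := by
  refine eventually_all.2 fun i => ?_
  rcases (hx₀ i).eq_or_lt with hzero | hpositive
  · exact eventually_nhdsWithin_of_forall fun x hx => by simpa [← hzero] using hx i
  · have hlt : c * x₀ i < x₀ i := mul_lt_of_lt_one_left hpositive hc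
    filter_upwards [nhdsWithin_le_nhds
      ((PiLp.continuous_apply 2 _ i).continuousAt.eventually (eventually_gt_nhds hlt))]
      with x hx using hx.le

theorem lowerSemicontinuousOn_infInner {I : Set (EuclideanSpace ℝ ι)}
    (hI : ∀ α ∈ I, ∀ i, 0 ≤ α i) :
    LowerSemicontinuousOn (infInner I) {x | ∀ i, 0 ≤ x i} := by
  intro x₀ hx₀ y hy
  have hscale : Tendsto (fun c : ℝ => c * infInner I x₀) (𝓝[<] 1) (𝓝 (infInner I x₀)) := by
    simpa using ((continuous_mul_const (infInner I x₀)).tendsto 1).mono_left nhdsWithin_le_nhds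
  have hunit : ∀ᶠ c in 𝓝[<] (1 : ℝ), c ∈ Ioo 0 1 := Ioo_mem_nhdsLT zero_lt_one
  obtain ⟨c, ⟨hc₀, hc₁⟩, hyc⟩ := (hunit.and (hscale.eventually (eventually_gt_nhds hy))).exists
  filter_upwards [eventually_mul_apply_le hx₀ hc₁] with x hx
  exact hyc.trans_le (mul_infInner_le_infInner hI hx₀ hc₀.le hx)

theorem continuousOn_infInner {I : Set (EuclideanSpace ℝ ι)} (hI : ∀ α ∈ I, ∀ i, 0 ≤ α i) :
    ContinuousOn (infInner I) {x | ∀ i, 0 ≤ x i} :=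
  continuousOn_iff_lower_upperSemicontinuousOn.2
    ⟨lowerSemicontinuousOn_infInner hI, upperSemicontinuousOn_infInner hI⟩

theorem inf_linear_continuousOn_general (d : ℕ) (I : Set (EuclideanSpace ℝ (Fin d)))
    (hpos : ∀ α ∈ I, ∀ i, 0 < α i) :
    ContinuousOn
      (fun x : EuclideanSpace ℝ (Fin d) => sInf {v : ℝ | ∃ α ∈ I, v = (inner ℝ x α : ℝ)})
      {x : EuclideanSpace ℝ (Fin d) | (∀ i, x i ∈ Set.Icc (0 : ℝ) 1) ∧ ∑ i, x i = 1} :=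
  ((continuousOn_infInner fun α hα i => (hpos α hα i).le).mono fun _ hx i => (hx.1 i).1).congr
    fun x _ => sInf_setOf_inner_eq_infInner I x

/-- Continuity of the infimum of linear functions with positive coefficients on the simplex. -/
theorem inf_linear_continuousOn (d : ℕ) (I : Set (EuclideanSpace ℝ (Fin d)))
    (hI : I.Nonempty) (hpos : ∀ α ∈ I, ∀ i, 0 < α i) :
    ContinuousOn
      (fun x : EuclideanSpace ℝ (Fin d) => sInf {v : ℝ | ∃ α ∈ I, v = (inner ℝ x α : ℝ)})
      {x : EuclideanSpace ℝ (Fin d) | (∀ i, x i ∈ Set.Icc (0 : ℝ) 1) ∧ ∑ i, x i = 1} :=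
  inf_linear_continuousOn_general d I hpos
end

section
/- Let G be a closed subset of S^d × W with W ⊆ ℝ^k compact convex, such that every fiber G_x is nonempty and convex. For every ε > 0 there exists δ > 0 such that for every x ∈ S^d, every point in the convex hull of {(x', w) ∈ G : dist(x, x') < δ} is within distance ε of G. -/
/-- Points of convex hulls of local pieces of a closed relation with convex fibers
are uniformly close to the relation. -/
theorem convexHull_near_relation (d k : ℕ)
    (W : Set (EuclideanSpace ℝ (Fin k))) (hWc : IsCompact W) (hWconv : Convex ℝ W)
    (G : Set (EuclideanSpace ℝ (Fin (d + 1)) × EuclideanSpace ℝ (Fin k)))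
    (hGclosed : IsClosed G)
    (hGsub : G ⊆ (Metric.sphere (0 : EuclideanSpace ℝ (Fin (d + 1))) 1) ×ˢ W)
    (hne : ∀ x ∈ Metric.sphere (0 : EuclideanSpace ℝ (Fin (d + 1))) 1,
      {w | (x, w) ∈ G}.Nonempty)
    (hconv : ∀ x ∈ Metric.sphere (0 : EuclideanSpace ℝ (Fin (d + 1))) 1,
      Convex ℝ {w | (x, w) ∈ G})
    (ε : ℝ) (hε : 0 < ε) :
    ∃ δ > 0, ∀ x ∈ Metric.sphere (0 : EuclideanSpace ℝ (Fin (d + 1))) 1,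
      ∀ p ∈ convexHull ℝ {g ∈ G | dist x g.1 < δ}, Metric.infDist p G ≤ ε := by
  classical
  open Metric in
  set S : Set (EuclideanSpace ℝ (Fin (d + 1))) := Metric.sphere 0 1 with hSdef
  have hScpt : IsCompact S := isCompact_sphere 0 1
  have hGcpt : IsCompact G :=
    (hScpt.prod hWc).of_isClosed_subset hGclosed hGsub
  -- Pointwise claim: near each `x` the convex hull stays `ε`-close to `G`.
  have key : ∀ x ∈ S, ∃ δ > 0,
      ∀ p ∈ convexHull ℝ {g ∈ G | dist x g.1 < δ}, Metric.infDist p G ≤ ε := by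
    intro x hx
    set C : Set (EuclideanSpace ℝ (Fin (d + 1)) × EuclideanSpace ℝ (Fin k)) :=
      {x} ×ˢ {w | (x, w) ∈ G} with hCdef
    have hCne : C.Nonempty := by
      obtain ⟨w, hw⟩ := hne x hx
      exact ⟨(x, w), rfl, hw⟩
    have hCsub : C ⊆ G := by
      rintro ⟨a, b⟩ ⟨ha, hb⟩
      simp only [Set.mem_singleton_iff] at ha
      subst ha
      exact hb
    have hCconv : Convex ℝ C := (convex_singleton x).prod (hconv x hx)
    -- The ε-neighborhood (w.r.t. infDist) of the convex set C is convex.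
    have hTconv : Convex ℝ {p | Metric.infDist p C ≤ ε} := by
      intro p1 hp1 p2 hp2 a b ha hb hab
      simp only [Set.mem_setOf_eq] at hp1 hp2 ⊢
      refine le_of_forall_pos_le_add ?_
      intro η hη
      obtain ⟨c1, hc1, hd1⟩ := (Metric.infDist_lt_iff hCne).1
        (lt_of_le_of_lt hp1 (lt_add_of_pos_right ε hη))
      obtain ⟨c2, hc2, hd2⟩ := (Metric.infDist_lt_iff hCne).1
        (lt_of_le_of_lt hp2 (lt_add_of_pos_right ε hη))
      have hc : a • c1 + b • c2 ∈ C := hCconv hc1 hc2 ha hb hab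
      have h1 : Metric.infDist (a • p1 + b • p2) C ≤ dist (a • p1 + b • p2) (a • c1 + b • c2) :=
        Metric.infDist_le_dist_of_mem hc
      have h2 : dist (a • p1 + b • p2) (a • c1 + b • c2)
          ≤ dist (a • p1) (a • c1) + dist (b • p2) (b • c2) := dist_add_add_le _ _ _ _
      have h3 : dist (a • p1) (a • c1) = a * dist p1 c1 := by
        rw [dist_smul₀, Real.norm_eq_abs, abs_of_nonneg ha]
      have h4 : dist (b • p2) (b • c2) = b * dist p2 c2 := by
        rw [dist_smul₀, Real.norm_eq_abs, abs_of_nonneg hb]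
      have hd1' : dist p1 c1 ≤ ε + η := hd1.le
      have hd2' : dist p2 c2 ≤ ε + η := hd2.le
      nlinarith [dist_nonneg (x := p1) (y := c1), dist_nonneg (x := p2) (y := c2)]
    -- Find δ > 0 such that points of G near x are ε-close to C.
    have hK : ∃ δ > 0, ∀ g ∈ G, dist x g.1 < δ → Metric.infDist g C ≤ ε := by
      set K : Set (EuclideanSpace ℝ (Fin (d + 1)) × EuclideanSpace ℝ (Fin k)) :=
        {p ∈ G | ε ≤ Metric.infDist p C} with hKdef
      have hKcl : IsClosed K :=
        hGclosed.inter (isClosed_le continuous_const (Metric.continuous_infDist_pt C))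
      have hKcpt : IsCompact K := hGcpt.of_isClosed_subset hKcl (Set.sep_subset _ _)
      rcases K.eq_empty_or_nonempty with hKe | hKne
      · refine ⟨1, one_pos, fun g hg _ => ?_⟩
        by_contra h
        have : g ∈ K := ⟨hg, (not_le.1 h).le⟩
        simp [hKe] at this
      · obtain ⟨q, hqK, hqmin⟩ := hKcpt.exists_isMinOn hKne
          ((continuous_const.dist continuous_fst).continuousOn
            (f := fun p : EuclideanSpace ℝ (Fin (d + 1)) × EuclideanSpace ℝ (Fin k) =>
              dist x p.1))
        have hqpos : 0 < dist x q.1 := by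
          rcases eq_or_ne x q.1 with h | h
          · exfalso
            have hqC : q ∈ C := by
              refine ⟨h.symm ▸ rfl, ?_⟩
              have : (x, q.2) = q := by rw [h]
              simpa [Set.mem_setOf_eq, this] using hqK.1
            have : Metric.infDist q C = 0 := Metric.infDist_zero_of_mem hqC
            linarith [hqK.2, this]
          · exact dist_pos.2 h
        refine ⟨dist x q.1, hqpos, fun g hg hlt => ?_⟩
        by_contra h
        have hgK : g ∈ K := ⟨hg, (not_le.1 h).le⟩
        exact absurd (hqmin hgK) (not_le.2 hlt)
    obtain ⟨δ, hδpos, hδ⟩ := hK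
    refine ⟨δ, hδpos, fun p hp => ?_⟩
    have hsub : {g ∈ G | dist x g.1 < δ} ⊆ {p | Metric.infDist p C ≤ ε} :=
      fun g hg => hδ g hg.1 hg.2
    have hpC : Metric.infDist p C ≤ ε := convexHull_min hsub hTconv hp
    exact le_trans (Metric.infDist_le_infDist_of_subset hCsub hCne) hpC
  -- Uniformize via compactness of the sphere.
  choose! δf hδf using key
  have hcov : S ⊆ ⋃ x ∈ S, Metric.ball x (δf x / 2) := by
    intro y hy
    exact Set.mem_biUnion hy (Metric.mem_ball_self (half_pos (hδf y hy).1))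
  obtain ⟨b, hbS, hbfin, hbcov⟩ := hScpt.elim_finite_subcover_image
    (fun x _ => Metric.isOpen_ball) hcov
  have hSne : S.Nonempty := by
    have : (0 : ℝ) ≤ 1 := zero_le_one
    exact NormedSpace.sphere_nonempty.2 this
  have hbne : b.Nonempty := by
    obtain ⟨y, hy⟩ := hSne
    obtain ⟨x, hxb, -⟩ := Set.mem_iUnion₂.1 (hbcov hy)
    exact ⟨x, hxb⟩
  set t := hbfin.toFinset with htdef
  have htne : t.Nonempty := by
    obtain ⟨x, hxb⟩ := hbne
    exact ⟨x, hbfin.mem_toFinset.2 hxb⟩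
  set δ : ℝ := t.inf' htne (fun x => δf x / 2) with hδdef
  have hδpos : 0 < δ := by
    rw [hδdef, Finset.lt_inf'_iff]
    intro x hxt
    exact half_pos (hδf x (hbS (hbfin.mem_toFinset.1 hxt))).1
  refine ⟨δ, hδpos, fun y hy p hp => ?_⟩
  obtain ⟨x, hxb, hyball⟩ := Set.mem_iUnion₂.1 (hbcov hy)
  have hxS : x ∈ S := hbS hxb
  have hδle : δ ≤ δf x / 2 :=
    Finset.inf'_le _ (hbfin.mem_toFinset.2 hxb)
  have hsub : {g ∈ G | dist y g.1 < δ} ⊆ {g ∈ G | dist x g.1 < δf x} := by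
    rintro g ⟨hgG, hgd⟩
    refine ⟨hgG, ?_⟩
    have h1 : dist x g.1 ≤ dist x y + dist y g.1 := dist_triangle _ _ _
    have h2 : dist x y < δf x / 2 := by
      rw [Metric.mem_ball, dist_comm] at hyball
      exact hyball
    linarith
  exact (hδf x hxS).2 p (convexHull_mono hsub hp)
end

section
/- Let d ∈ ℕ and 0 < α < 1/(d+1). Suppose r : X → ℝ^d is a map such that for every distribution D on X × {−1,+1} realizable by a concept class C, there exists w ∈ ℝ^d with Pr_{(x,y)∼D}[sign(⟨w, r(x)⟩) ≠ y] ≤ α. Then for every finite sample S ⊆ X × {−1,+1} realizable by C, there exists w_S ∈ ℝ^d with sign(⟨w_S, r(x)⟩) = y for all (x,y) ∈ S. -/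
/-!
For a realizable sample `T` with `|T| ≤ d + 1`, the hypothesis applied to the uniform distribution
on `T` yields `w` with error at most `α < 1/|T|`; since each misclassified point of `T` costs
`1/|T|`, such a `w` classifies `T` perfectly. Thus the convex sets `{w | sgn ⟨w, r x⟩ = y}`,
`(x, y) ∈ S`, have nonempty `(d + 1)`-wise intersections, and Helly's theorem in `ℝ^d` gives a
point common to all of them.
-/

open MeasureTheory

/-- `sgn t = +1` if `t ≥ 0` and `-1` otherwise. -/
noncomputable def sgn (t : ℝ) : ℝ := if 0 ≤ t then 1 else -1

open ProbabilityTheory Finset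
open scoped ENNReal

lemma monotone_sgn : Monotone sgn := by
  intro s t hst
  unfold sgn
  split_ifs <;> linarith

lemma convex_setOf_sgn_eq {E : Type*} [AddCommGroup E] [Module ℝ E] (f : E →ₗ[ℝ] ℝ)
    (y : ℝ) : Convex ℝ {w | sgn (f w) = y} :=
  (Set.ordConnected_singleton.preimage_mono monotone_sgn).convex.linear_preimage f

section UniformOn

variable {Ω : Type*} [MeasurableSpace Ω] [MeasurableSingletonClass Ω]

lemma ae_mem_uniformOn {s : Set Ω} (hs : s.Finite) : ∀ᵐ ω ∂uniformOn s, ω ∈ s := by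
  rw [ae_iff, uniformOn_eq_zero_iff hs]
  exact Set.inter_compl_self s

lemma inv_card_le_uniformOn {s : Finset Ω} {t : Set Ω} {ω : Ω} (hωs : ω ∈ s)
    (hωt : ω ∈ t) :
    (#s : ℝ≥0∞)⁻¹ ≤ uniformOn (s : Set Ω) t := by
  classical
  calc (#s : ℝ≥0∞)⁻¹ = uniformOn (s : Set Ω) ({ω} : Finset Ω) := by
        rw [uniformOn_apply_finset, inter_singleton_of_mem hωs, card_singleton, Nat.cast_one,
          one_div]
    _ ≤ uniformOn (s : Set Ω) t := measure_mono (by simpa using hωt)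

lemma notMem_of_uniformOn_toReal_lt_inv_card {s : Finset Ω} {t : Set Ω}
    (hst : (uniformOn (s : Set Ω) t).toReal < (#s : ℝ)⁻¹) : ∀ ω ∈ s, ω ∉ t := by
  intro ω hωs hωt
  have := ENNReal.toReal_mono (measure_ne_top _ t) (inv_card_le_uniformOn hωs hωt)
  rw [ENNReal.toReal_inv, ENNReal.toReal_natCast] at this
  linarith

end UniformOn

lemma exists_forall_sgn_inner_eq_of_lt_inv_card {X : Type*} [MeasurableSpace X]
    [MeasurableSingletonClass X] {d : ℕ} {α : ℝ} {C : Set (X → ℝ)}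
    {r : X → EuclideanSpace ℝ (Fin d)}
    (hrep : ∀ D : Measure (X × ℝ), IsProbabilityMeasure D →
      (∃ c ∈ C, ∀ᵐ p ∂D, c p.1 = p.2) →
      ∃ w : EuclideanSpace ℝ (Fin d),
        (D {p | sgn (inner ℝ w (r p.1) : ℝ) ≠ p.2}).toReal ≤ α)
    {T : Finset (X × ℝ)} (hT : T.Nonempty) (hαT : α < (#T : ℝ)⁻¹)
    {c : X → ℝ} (hc : c ∈ C) (hcT : ∀ p ∈ T, c p.1 = p.2) :
    ∃ w : EuclideanSpace ℝ (Fin d), ∀ p ∈ T, sgn (inner ℝ w (r p.1) : ℝ) = p.2 := by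
  obtain ⟨w, hw⟩ := hrep (uniformOn (T : Set (X × ℝ)))
    (isProbabilityMeasure_uniformOn T.finite_toSet (coe_nonempty.mpr hT))
    ⟨c, hc, (ae_mem_uniformOn T.finite_toSet).mono hcT⟩
  refine ⟨w, fun p hp => not_not.mp ?_⟩
  exact notMem_of_uniformOn_toReal_lt_inv_card (hw.trans_lt hαT) p hp

theorem alpha_representation_is_exact_on_samples_general {X : Type*} [MeasurableSpace X]
    [MeasurableSingletonClass X]
    (d : ℕ) (α : ℝ) (hαd : α < 1 / (d + 1))
    (C : Set (X → ℝ)) (r : X → EuclideanSpace ℝ (Fin d))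
    (hrep : ∀ D : Measure (X × ℝ), IsProbabilityMeasure D →
      (∃ c ∈ C, ∀ᵐ p ∂D, c p.1 = p.2) →
      ∃ w : EuclideanSpace ℝ (Fin d),
        (D {p | sgn (inner ℝ w (r p.1) : ℝ) ≠ p.2}).toReal ≤ α) :
    ∀ S : Finset (X × ℝ), (∃ c ∈ C, ∀ p ∈ S, c p.1 = p.2) →
      ∃ wS : EuclideanSpace ℝ (Fin d), ∀ p ∈ S, sgn (inner ℝ wS (r p.1) : ℝ) = p.2 := by
  rintro S ⟨c, hc, hcS⟩
  suffices h : (⋂ p ∈ S, {w | sgn (inner ℝ w (r p.1)) = p.2}).Nonempty by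
    obtain ⟨w, hw⟩ := h
    exact ⟨w, by simpa using hw⟩
  refine Convex.helly_theorem' (fun p _ => convex_setOf_sgn_eq ((innerₗ _).flip (r p.1)) p.2)
    fun I hIS hIcard => ?_
  rw [finrank_euclideanSpace_fin] at hIcard
  obtain rfl | hI := I.eq_empty_or_nonempty
  · simp
  have hαI : α < (#I : ℝ)⁻¹ := hαd.trans_le <| by
    rw [one_div]
    exact inv_anti₀ (by exact_mod_cast hI.card_pos) (by exact_mod_cast hIcard)
  obtain ⟨w, hw⟩ :=
    exists_forall_sgn_inner_eq_of_lt_inv_card hrep hI hαI hc fun p hp => hcS p (hIS hp)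
  exact ⟨w, by simpa using hw⟩

/-- An `α`-representation by halfspaces in `ℝ^d` with `α < 1/(d+1)` classifies every
`C`-realizable finite sample perfectly. -/
theorem alpha_representation_is_exact_on_samples {X : Type*} [MeasurableSpace X]
    [MeasurableSingletonClass X]
    (d : ℕ) (α : ℝ) (hα : 0 < α) (hαd : α < 1 / (d + 1))
    (C : Set (X → ℝ)) (r : X → EuclideanSpace ℝ (Fin d))
    (hrep : ∀ D : Measure (X × ℝ), IsProbabilityMeasure D →
      (∃ c ∈ C, ∀ᵐ p ∂D, c p.1 = p.2) →
      ∃ w : EuclideanSpace ℝ (Fin d),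
        (D {p | sgn (inner ℝ w (r p.1) : ℝ) ≠ p.2}).toReal ≤ α) :
    ∀ S : Finset (X × ℝ), (∃ c ∈ C, ∀ p ∈ S, c p.1 = p.2) →
      ∃ wS : EuclideanSpace ℝ (Fin d), ∀ p ∈ S, sgn (inner ℝ wS (r p.1) : ℝ) = p.2 :=
  alpha_representation_is_exact_on_samples_general d α hαd C r hrep
end
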